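/- For a multiplicative n-Hom Lie superalgebra N, [Der(N), C(N)] ⊆ C(N): if D is a homogeneous α^k-derivation of degree ξ and E a homogeneous α^s-centroid element of degree η, then the supercommutator [D,E] = DE − (−1)^{ξη}ED is an α^{k+s}-centroid element of degree ξ+η. -/

import Mathlib

open scoped BigOperators

noncomputable section

variable {𝔽 : Type*} [Field 𝔽]
variable {N : Type*} [AddCommGroup N] [Module 𝔽 N]

/-- The sign `(-1)^g` for `g : ZMod 2`. -/
def sgn (𝔽 : Type*) [Field 𝔽] (g : ZMod 2) : 𝔽 := if g = 0 then 1 else -1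

/-- `|X_{i-1}|` : the sum of the degrees `d j` for `j < i`. -/
def psum {m : ℕ} (d : Fin m → ZMod 2) (i : Fin m) : ZMod 2 :=
  ∑ j ∈ Finset.univ.filter (fun j => j < i), d j

/-- `D` is homogeneous of degree `ξ` with respect to the `ℤ₂`-grading `gr`. -/
def Homog (gr : ZMod 2 → Submodule 𝔽 N) (ξ : ZMod 2) (D : N →ₗ[𝔽] N) : Prop :=
  ∀ g : ZMod 2, ∀ x ∈ gr g, D x ∈ gr (g + ξ)

/-- `(N, br, α)` is a multiplicative `n`-Hom Lie superalgebra, where `n = m + 1`: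
`N = N₀ ⊕ N₁` is `ℤ₂`-graded, the `n`-multilinear bracket `br` is even (adds degrees),
super skew-symmetric in adjacent arguments, `α` is even, multiplicative, and the super
Hom-Jacobi identity holds. -/
structure IsMNHLS {m : ℕ} (gr : ZMod 2 → Submodule 𝔽 N)
    (br : MultilinearMap 𝔽 (fun _ : Fin (m + 1) => N) N) (α : N →ₗ[𝔽] N) : Prop where
  internal : DirectSum.IsInternal gr
  alpha_even : ∀ g : ZMod 2, ∀ x ∈ gr g, α x ∈ gr g
  br_deg : ∀ (d : Fin (m + 1) → ZMod 2) (x : Fin (m + 1) → N),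
      (∀ i, x i ∈ gr (d i)) → br x ∈ gr (∑ i, d i)
  skew : ∀ (d : Fin (m + 1) → ZMod 2) (x : Fin (m + 1) → N),
      (∀ i, x i ∈ gr (d i)) → ∀ i j : Fin (m + 1), (i : ℕ) + 1 = (j : ℕ) →
      br x = -sgn 𝔽 (d i * d j) • br (x ∘ Equiv.swap i j)
  alpha_br : ∀ x : Fin (m + 1) → N, α (br x) = br fun i => α (x i)
  jacobi : ∀ (dx : Fin m → ZMod 2) (x : Fin m → N)
      (dy : Fin (m + 1) → ZMod 2) (y : Fin (m + 1) → N),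
      (∀ i, x i ∈ gr (dx i)) → (∀ i, y i ∈ gr (dy i)) →
      br (Fin.snoc (fun i => α (x i)) (br y)) =
        ∑ i : Fin (m + 1), sgn 𝔽 ((∑ j, dx j) * psum dy i) •
          br (Function.update (fun j => α (y j)) i (br (Fin.snoc x (y i))))

/-- `D` is a homogeneous `α^k`-derivation of degree `ξ`. -/
def IsDer {m : ℕ} (gr : ZMod 2 → Submodule 𝔽 N)
    (br : MultilinearMap 𝔽 (fun _ : Fin (m + 1) => N) N) (α : N →ₗ[𝔽] N)
    (k : ℕ) (ξ : ZMod 2) (D : N →ₗ[𝔽] N) : Prop :=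
  Homog gr ξ D ∧ D ∘ₗ α = α ∘ₗ D ∧
    ∀ (d : Fin (m + 1) → ZMod 2) (x : Fin (m + 1) → N), (∀ i, x i ∈ gr (d i)) →
      D (br x) = ∑ i : Fin (m + 1), sgn 𝔽 (ξ * psum d i) •
        br (Function.update (fun j => (α ^ k) (x j)) i (D (x i)))

/-- `D` is a homogeneous `α^k`-quasiderivation of degree `ξ` with associated map `D'`. -/
def IsQDerWith {m : ℕ} (gr : ZMod 2 → Submodule 𝔽 N)
    (br : MultilinearMap 𝔽 (fun _ : Fin (m + 1) => N) N) (α : N →ₗ[𝔽] N)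
    (k : ℕ) (ξ : ZMod 2) (D D' : N →ₗ[𝔽] N) : Prop :=
  Homog gr ξ D ∧ D ∘ₗ α = α ∘ₗ D ∧ Homog gr ξ D' ∧ D' ∘ₗ α = α ∘ₗ D' ∧
    ∀ (d : Fin (m + 1) → ZMod 2) (x : Fin (m + 1) → N), (∀ i, x i ∈ gr (d i)) →
      (∑ i : Fin (m + 1), sgn 𝔽 (ξ * psum d i) •
        br (Function.update (fun j => (α ^ k) (x j)) i (D (x i)))) = D' (br x)

/-- `D` is a homogeneous `α^k`-quasiderivation of degree `ξ`. -/
def IsQDer {m : ℕ} (gr : ZMod 2 → Submodule 𝔽 N)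
    (br : MultilinearMap 𝔽 (fun _ : Fin (m + 1) => N) N) (α : N →ₗ[𝔽] N)
    (k : ℕ) (ξ : ZMod 2) (D : N →ₗ[𝔽] N) : Prop :=
  ∃ D' : N →ₗ[𝔽] N, IsQDerWith gr br α k ξ D D'

/-- `D` is a homogeneous generalized `α^k`-derivation of degree `ξ`:
there are `D⁽¹⁾, …, D⁽ⁿ⁾` (here `DD i` for positions `i = 1, …, n-1`, with `DD 0 = D`,
and `Dn = D⁽ⁿ⁾`) all homogeneous of degree `ξ` and commuting with `α`, satisfying the
defining identity. -/
def IsGDer {m : ℕ} (gr : ZMod 2 → Submodule 𝔽 N)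
    (br : MultilinearMap 𝔽 (fun _ : Fin (m + 1) => N) N) (α : N →ₗ[𝔽] N)
    (k : ℕ) (ξ : ZMod 2) (D : N →ₗ[𝔽] N) : Prop :=
  Homog gr ξ D ∧ D ∘ₗ α = α ∘ₗ D ∧
    ∃ (DD : Fin (m + 1) → (N →ₗ[𝔽] N)) (Dn : N →ₗ[𝔽] N),
      DD 0 = D ∧ (∀ i, Homog gr ξ (DD i)) ∧ (∀ i, DD i ∘ₗ α = α ∘ₗ DD i) ∧
      Homog gr ξ Dn ∧ Dn ∘ₗ α = α ∘ₗ Dn ∧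
      ∀ (d : Fin (m + 1) → ZMod 2) (x : Fin (m + 1) → N), (∀ i, x i ∈ gr (d i)) →
        (∑ i : Fin (m + 1), sgn 𝔽 (ξ * psum d i) •
          br (Function.update (fun j => (α ^ k) (x j)) i (DD i (x i)))) = Dn (br x)

/-- `D` is a homogeneous `α^k`-centroid element of degree `ξ`. -/
def IsCent {m : ℕ} (gr : ZMod 2 → Submodule 𝔽 N)
    (br : MultilinearMap 𝔽 (fun _ : Fin (m + 1) => N) N) (α : N →ₗ[𝔽] N)
    (k : ℕ) (ξ : ZMod 2) (D : N →ₗ[𝔽] N) : Prop :=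
  Homog gr ξ D ∧ D ∘ₗ α = α ∘ₗ D ∧
    ∀ (d : Fin (m + 1) → ZMod 2) (x : Fin (m + 1) → N), (∀ i, x i ∈ gr (d i)) →
      (∀ i : Fin (m + 1),
        br (Function.update (fun j => (α ^ k) (x j)) 0 (D (x 0))) =
          sgn 𝔽 (ξ * psum d i) •
            br (Function.update (fun j => (α ^ k) (x j)) i (D (x i)))) ∧
      br (Function.update (fun j => (α ^ k) (x j)) 0 (D (x 0))) = D (br x)

/-- `D` is a homogeneous `α^k`-quasicentroid element of degree `ξ`. -/
def IsQCent {m : ℕ} (gr : ZMod 2 → Submodule 𝔽 N)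
    (br : MultilinearMap 𝔽 (fun _ : Fin (m + 1) => N) N) (α : N →ₗ[𝔽] N)
    (k : ℕ) (ξ : ZMod 2) (D : N →ₗ[𝔽] N) : Prop :=
  Homog gr ξ D ∧ D ∘ₗ α = α ∘ₗ D ∧
    ∀ (d : Fin (m + 1) → ZMod 2) (x : Fin (m + 1) → N), (∀ i, x i ∈ gr (d i)) →
      ∀ i : Fin (m + 1),
        br (Function.update (fun j => (α ^ k) (x j)) 0 (D (x 0))) =
          sgn 𝔽 (ξ * psum d i) •
            br (Function.update (fun j => (α ^ k) (x j)) i (D (x i)))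

/-- `D` is a homogeneous `α^k`-center derivation of degree `ξ`. -/
def IsZDer {m : ℕ} (gr : ZMod 2 → Submodule 𝔽 N)
    (br : MultilinearMap 𝔽 (fun _ : Fin (m + 1) => N) N) (α : N →ₗ[𝔽] N)
    (k : ℕ) (ξ : ZMod 2) (D : N →ₗ[𝔽] N) : Prop :=
  Homog gr ξ D ∧ D ∘ₗ α = α ∘ₗ D ∧
    ∀ (d : Fin (m + 1) → ZMod 2) (x : Fin (m + 1) → N), (∀ i, x i ∈ gr (d i)) →
      br (Function.update (fun j => (α ^ k) (x j)) 0 (D (x 0))) = 0 ∧ D (br x) = 0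

/-- The center `Z(N) = {x : [x, y₂, …, yₙ] = 0}`. -/
def center {m : ℕ} (br : MultilinearMap 𝔽 (fun _ : Fin (m + 1) => N) N) :
    Submodule 𝔽 N where
  carrier := {x | ∀ y : Fin (m + 1) → N, br (Function.update y 0 x) = 0}
  add_mem' := by
    intro a b ha hb y
    rw [MultilinearMap.map_update_add, ha y, hb y, add_zero]
  zero_mem' := by
    intro y
    exact br.map_update_zero y 0
  smul_mem' := by
    intro c a ha y
    rw [MultilinearMap.map_update_smul, ha y, smul_zero]

/-- The Jordan product `D • E = ½(DE + (-1)^{|D||E|} ED)` of operators of degrees `ξ, η`. -/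
def jprod (𝔽 : Type*) [Field 𝔽] {N : Type*} [AddCommGroup N] [Module 𝔽 N]
    (ξ η : ZMod 2) (D E : N →ₗ[𝔽] N) : N →ₗ[𝔽] N :=
  (2 : 𝔽)⁻¹ • (D ∘ₗ E + sgn 𝔽 (ξ * η) • (E ∘ₗ D))

/-- The Hom-associator of the Jordan product with respect to `α̃(u) = α ∘ u`, where
`x, y, z` have degrees `a, b, c`. -/
def jassoc (𝔽 : Type*) [Field 𝔽] {N : Type*} [AddCommGroup N] [Module 𝔽 N]
    (α : N →ₗ[𝔽] N) (a b c : ZMod 2) (x y z : N →ₗ[𝔽] N) : N →ₗ[𝔽] N :=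
  jprod 𝔽 (a + b) c (jprod 𝔽 a b x y) (α ∘ₗ z) -
    jprod 𝔽 a (b + c) (α ∘ₗ x) (jprod 𝔽 b c y z)

/-- The bracket subalgebra `[N, …, N]`, the span of all brackets. -/
def brSub {m : ℕ} (br : MultilinearMap 𝔽 (fun _ : Fin (m + 1) => N) N) :
    Submodule 𝔽 N :=
  Submodule.span 𝔽 (Set.range fun x : Fin (m + 1) → N => br x)

/-- The bracket of `Ň = Nt + Ntⁿ` (modelled as `N × N`, first coordinate the coefficient
of `t`, second the coefficient of `tⁿ`): `[x₁t, …, xₙt] = [x₁, …, xₙ]tⁿ` and every bracket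
involving a `tⁿ`-term vanishes. -/
def checkBr {m : ℕ} (br : MultilinearMap 𝔽 (fun _ : Fin (m + 1) => N) N) :
    MultilinearMap 𝔽 (fun _ : Fin (m + 1) => N × N) (N × N) :=
  (LinearMap.inr 𝔽 N N).compMultilinearMap
    (br.compLinearMap fun _ => LinearMap.fst 𝔽 N N)

/-- The grading of `Ň = Nt + Ntⁿ`. -/
def checkGr (gr : ZMod 2 → Submodule 𝔽 N) (g : ZMod 2) : Submodule 𝔽 (N × N) :=
  (gr g).prod (gr g)

/-- The map `φ(D) : Ň → Ň`, `φ(D)(at + utⁿ + btⁿ) = D(a)t + D'(b)tⁿ`, where `π` is the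
projection of `N` onto `[N, …, N]` along `U`. -/
def phiMap (D D' π : N →ₗ[𝔽] N) : N × N →ₗ[𝔽] N × N :=
  LinearMap.prodMap D (D' ∘ₗ π)

/-! Write `C = DE - (-1)^{ξη} ED`. Expanding `C [x₁, …, xₙ]` with the derivation rule for `D`
and the centroid rule for `E` (moving `E` to a fixed slot `i`) produces two sums over the
slot `j` hit by `D`. For `j ≠ i` the terms of `DE` and of `(-1)^{ξη} ED` coincide, because
`D` and `E` act on different slots and commute with `α`; the signs agree since exactly one
of `i < j`, `j < i` holds. Only the terms `j = i` survive, and they combine to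
`(-1)^{(ξ+η)|X_{i-1}|} [α^{k+s}(x₁), …, C(xᵢ), …, α^{k+s}(xₙ)]`. -/

lemma sgn_zero : sgn 𝔽 0 = 1 := if_pos rfl

lemma sgn_add (a b : ZMod 2) : sgn 𝔽 (a + b) = sgn 𝔽 a * sgn 𝔽 b := by
  have h01 : ∀ c : ZMod 2, c = 0 ∨ c = 1 := by decide
  rcases h01 a with rfl | rfl <;> rcases h01 b with rfl | rfl <;>
    simp [sgn, show (1 + 1 : ZMod 2) = 0 from rfl, show (1 : ZMod 2) ≠ 0 from by decide]

lemma psum_zero {m : ℕ} (d : Fin (m + 1) → ZMod 2) : psum d 0 = 0 :=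
  Finset.sum_eq_zero fun l hl => absurd (Finset.mem_filter.1 hl).2 (Fin.not_lt_zero l)

lemma psum_update_add {m : ℕ} (d : Fin m → ZMod 2) (j : Fin m) (c : ZMod 2) (i : Fin m) :
    psum (Function.update d j (d j + c)) i = psum d i + if j < i then c else 0 := by
  unfold psum
  by_cases h : j < i
  · have hj : j ∈ Finset.univ.filter (· < i) := by simp [h]
    rw [Finset.sum_update_of_mem hj, if_pos h, ← Finset.add_sum_erase _ d hj,
      Finset.sdiff_singleton_eq_erase]
    ring
  · have hj : j ∉ Finset.univ.filter (· < i) := by simp [h]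
    rw [Finset.sum_update_of_notMem hj, if_neg h, add_zero]

/-- The Koszul sign for letting an operator of degree `ξ` acting on slot `j` and one of degree
`η` acting on slot `i ≠ j` pass each other. -/
lemma sgn_psum_update_swap {m : ℕ} (d : Fin m → ZMod 2) (ξ η : ZMod 2) {i j : Fin m}
    (hji : j ≠ i) :
    sgn 𝔽 (η * psum d i) * sgn 𝔽 (ξ * psum (Function.update d i (d i + η)) j) =
      sgn 𝔽 (ξ * η) *
        (sgn 𝔽 (ξ * psum d j) * sgn 𝔽 (η * psum (Function.update d j (d j + ξ)) i)) := by
  simp only [psum_update_add, ← sgn_add]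
  congr 1
  rcases hji.lt_or_gt with h | h
  · simp only [h, not_lt_of_gt h, if_true, if_false]
    grind
  · simp only [h, not_lt_of_gt h, if_true, if_false]
    grind

lemma sum_sub_smul_sum_eq_of_forall_ne {ι M : Type*} [Fintype ι] [AddCommGroup M]
    [Module 𝔽 M] {f g : ι → M} (c : 𝔽) (i : ι) (h : ∀ j, j ≠ i → f j = c • g j) :
    ∑ j, f j - c • ∑ j, g j = f i - c • g i := by
  rw [Finset.smul_sum, ← Finset.sum_sub_distrib]
  exact Fintype.sum_eq_single i fun j hj => by rw [h j hj, sub_self]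

lemma Homog.comp {gr : ZMod 2 → Submodule 𝔽 N} {ξ η : ZMod 2} {D E : N →ₗ[𝔽] N}
    (hD : Homog gr ξ D) (hE : Homog gr η E) : Homog gr (ξ + η) (D ∘ₗ E) := fun g x hx => by
  simpa only [LinearMap.comp_apply, add_assoc, add_comm η ξ] using hD _ _ (hE g x hx)

lemma Homog.sub_smul {gr : ZMod 2 → Submodule 𝔽 N} {ξ : ZMod 2} {D E : N →ₗ[𝔽] N}
    (hD : Homog gr ξ D) (hE : Homog gr ξ E) (c : 𝔽) : Homog gr ξ (D - c • E) :=
  fun g x hx => sub_mem (hD g x hx) (Submodule.smul_mem _ c (hE g x hx))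

lemma pow_apply_mem {gr : ZMod 2 → Submodule 𝔽 N} {α : N →ₗ[𝔽] N}
    (hα : ∀ g, ∀ x ∈ gr g, α x ∈ gr g) (t : ℕ) {g : ZMod 2} {x : N} (hx : x ∈ gr g) :
    (α ^ t) x ∈ gr g := by
  induction t with
  | zero => simpa
  | succ t ih => rw [pow_succ', Module.End.mul_apply]; exact hα g _ ih

/-- The tuple `(α^k(x₁), …, D(xᵢ), …, α^k(xₙ))`. -/
def applyAt {ι : Type*} [DecidableEq ι] (α : N →ₗ[𝔽] N) (k : ℕ) (D : N →ₗ[𝔽] N)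
    (x : ι → N) (i : ι) : ι → N :=
  Function.update (fun j => (α ^ k) (x j)) i (D (x i))

section applyAt

variable {ι : Type*} [DecidableEq ι] {α : N →ₗ[𝔽] N} {k s : ℕ} {D E : N →ₗ[𝔽] N}

lemma applyAt_mem {gr : ZMod 2 → Submodule 𝔽 N} {ξ : ZMod 2} {d : ι → ZMod 2} {x : ι → N}
    (hα : ∀ g, ∀ x ∈ gr g, α x ∈ gr g) (hD : Homog gr ξ D) (hx : ∀ l, x l ∈ gr (d l))
    (i l : ι) : applyAt α k D x i l ∈ gr (Function.update d i (d i + ξ) l) := by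
  rcases eq_or_ne l i with rfl | hl
  · simpa [applyAt] using hD _ _ (hx l)
  · simpa [applyAt, hl] using pow_apply_mem hα k (hx l)

lemma applyAt_applyAt_self (x : ι → N) (i : ι) :
    applyAt α k D (applyAt α s E x i) i =
      Function.update (fun j => (α ^ (k + s)) (x j)) i (D (E (x i))) := by
  ext l
  rcases eq_or_ne l i with rfl | hl
  · simp [applyAt]
  · simp [applyAt, hl, pow_add]

lemma applyAt_applyAt_comm (hD : Commute D α) (hE : Commute E α) (x : ι → N) {i j : ι}
    (hij : i ≠ j) : applyAt α s E (applyAt α k D x j) i = applyAt α k D (applyAt α s E x i) j := by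
  ext l
  rcases eq_or_ne l i with rfl | hli
  · simp [applyAt, hij, ← Module.End.mul_apply, ((hE.pow_right k).eq)]
  rcases eq_or_ne l j with rfl | hlj
  · simp [applyAt, hli, ← Module.End.mul_apply, ((hD.pow_right s).eq)]
  · simp [applyAt, hli, hlj, ← Module.End.mul_apply, ← pow_add, add_comm]

end applyAt

section Centroid

variable {m : ℕ} {gr : ZMod 2 → Submodule 𝔽 N}
  {br : MultilinearMap 𝔽 (fun _ : Fin (m + 1) => N) N} {α : N →ₗ[𝔽] N}

lemma IsCent.map_br_eq {s : ℕ} {η : ZMod 2} {E : N →ₗ[𝔽] N} (hE : IsCent gr br α s η E)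
    {d : Fin (m + 1) → ZMod 2} {x : Fin (m + 1) → N} (hx : ∀ l, x l ∈ gr (d l))
    (i : Fin (m + 1)) : E (br x) = sgn 𝔽 (η * psum d i) • br (applyAt α s E x i) := by
  obtain ⟨hshift, hbr⟩ := hE.2.2 d x hx
  rw [← hbr, hshift i]
  rfl

lemma IsDer.map_br_eq {k : ℕ} {ξ : ZMod 2} {D : N →ₗ[𝔽] N} (hD : IsDer gr br α k ξ D)
    {d : Fin (m + 1) → ZMod 2} {x : Fin (m + 1) → N} (hx : ∀ l, x l ∈ gr (d l)) :
    D (br x) = ∑ i, sgn 𝔽 (ξ * psum d i) • br (applyAt α k D x i) :=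
  hD.2.2 d x hx

lemma isCent_of_map_br_eq {k : ℕ} {ξ : ZMod 2} {C : N →ₗ[𝔽] N} (hC : Homog gr ξ C)
    (hCα : C ∘ₗ α = α ∘ₗ C)
    (h : ∀ (d : Fin (m + 1) → ZMod 2) (x : Fin (m + 1) → N), (∀ l, x l ∈ gr (d l)) →
      ∀ i, C (br x) = sgn 𝔽 (ξ * psum d i) • br (applyAt α k C x i)) :
    IsCent gr br α k ξ C := by
  refine ⟨hC, hCα, fun d x hx => ?_⟩
  have h0 : C (br x) = br (applyAt α k C x 0) := by
    rw [h d x hx 0, psum_zero, mul_zero, sgn_zero, one_smul]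
  exact ⟨fun i => h0.symm.trans (h d x hx i), h0.symm⟩

lemma IsDer.commutator_map_br_eq {k s : ℕ} {ξ η : ZMod 2} {D E : N →ₗ[𝔽] N}
    (hα : ∀ g, ∀ x ∈ gr g, α x ∈ gr g) (hD : IsDer gr br α k ξ D) (hE : IsCent gr br α s η E)
    {d : Fin (m + 1) → ZMod 2} {x : Fin (m + 1) → N} (hx : ∀ l, x l ∈ gr (d l))
    (i : Fin (m + 1)) :
    (D ∘ₗ E - sgn 𝔽 (ξ * η) • (E ∘ₗ D)) (br x) = sgn 𝔽 ((ξ + η) * psum d i) •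
      br (applyAt α (k + s) (D ∘ₗ E - sgn 𝔽 (ξ * η) • (E ∘ₗ D)) x i) := by
  have hEy := applyAt_mem (k := s) hα hE.1 hx i
  have hDE : D (E (br x)) = ∑ j, (sgn 𝔽 (η * psum d i) *
      sgn 𝔽 (ξ * psum (Function.update d i (d i + η)) j)) •
        br (applyAt α k D (applyAt α s E x i) j) := by
    simp only [hE.map_br_eq hx i, map_smul, hD.map_br_eq hEy, Finset.smul_sum, smul_smul]
  have hED : E (D (br x)) = ∑ j, (sgn 𝔽 (ξ * psum d j) *
      sgn 𝔽 (η * psum (Function.update d j (d j + ξ)) i)) •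
        br (applyAt α s E (applyAt α k D x j) i) := by
    simp only [hD.map_br_eq hx, map_sum, map_smul,
      fun j => hE.map_br_eq (applyAt_mem (k := k) hα hD.1 hx j) i, smul_smul]
  rw [LinearMap.sub_apply, LinearMap.smul_apply, LinearMap.comp_apply, LinearMap.comp_apply,
    hDE, hED, sum_sub_smul_sum_eq_of_forall_ne _ i fun j hji => by
      rw [applyAt_applyAt_comm hD.2.1 hE.2.1 x hji.symm, sgn_psum_update_swap d ξ η hji,
        smul_smul],
    applyAt_applyAt_self, applyAt_applyAt_self, psum_update_add, psum_update_add, add_comm s k]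
  simp only [lt_irrefl, if_false, add_zero, applyAt, LinearMap.sub_apply, LinearMap.smul_apply,
    LinearMap.comp_apply, MultilinearMap.map_update_sub, MultilinearMap.map_update_smul, add_mul,
    sgn_add]
  module

end Centroid

theorem der_bracket_cent_general {𝔽 : Type*} [Field 𝔽]
    {N : Type*} [AddCommGroup N] [Module 𝔽 N] {m : ℕ}
    (gr : ZMod 2 → Submodule 𝔽 N) (br : MultilinearMap 𝔽 (fun _ : Fin (m + 1) => N) N)
    (α : N →ₗ[𝔽] N) (H : IsMNHLS gr br α)
    (k s : ℕ) (ξ η : ZMod 2) (D E : N →ₗ[𝔽] N)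
    (hD : IsDer gr br α k ξ D) (hE : IsCent gr br α s η E) :
    IsCent gr br α (k + s) (ξ + η) (D ∘ₗ E - sgn 𝔽 (ξ * η) • (E ∘ₗ D)) := by
  refine isCent_of_map_br_eq ((hD.1.comp hE.1).sub_smul ?_ _) ?_ fun d x hx i =>
    hD.commutator_map_br_eq H.alpha_even hE hx i
  · simpa only [add_comm ξ η] using hE.1.comp hD.1
  · exact ((Commute.mul_left hD.2.1 hE.2.1).sub_left
      ((Commute.mul_left hE.2.1 hD.2.1).smul_left (sgn 𝔽 (ξ * η))) : Commute _ α)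

/-- Proposition 3.2(1): `[Der(N), C(N)] ⊆ C(N)`. -/
theorem der_bracket_cent {𝔽 : Type*} [Field 𝔽] [CharZero 𝔽]
    {N : Type*} [AddCommGroup N] [Module 𝔽 N] {m : ℕ} (hm : 1 ≤ m)
    (gr : ZMod 2 → Submodule 𝔽 N) (br : MultilinearMap 𝔽 (fun _ : Fin (m + 1) => N) N)
    (α : N →ₗ[𝔽] N) (H : IsMNHLS gr br α)
    (k s : ℕ) (ξ η : ZMod 2) (D E : N →ₗ[𝔽] N)
    (hD : IsDer gr br α k ξ D) (hE : IsCent gr br α s η E) :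
    IsCent gr br α (k + s) (ξ + η) (D ∘ₗ E - sgn 𝔽 (ξ * η) • (E ∘ₗ D)) :=
  der_bracket_cent_general gr br α H k s ξ η D E hD hE
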